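/- arXiv:2508.14575 — 4 statements merged into one kernel-verified Lean document; each statement's English description precedes it below -/
import Mathlib

section
/- Consider a finite set S = {1,...,N}×{0,1} and value iteration V_{k+1}(Δ,f) = min(Q_{k+1}((Δ,f),0), Q_{k+1}((Δ,f),1)) where Q_{k+1}((Δ,f),0) = Δ + (1-ε)h_k(Δ,f) + ε(1-g)h_k(min(Δ+1,N),0) + ε g·h_k(min(Δ+1,N),1) and Q_{k+1}((Δ,f),1) = Δ + (T-1)/2 + (1-ε/T)h_k(Δ,f) + (ε/T)p₁(f)[(1-g)h_k(min(Δ+T,N),0) + g·h_k(min(Δ+T,N),1)] + (ε/T)(1-p₁(f))[(1-g)h_k(T,0) + g·h_k(T,1)], with h_k = V_k - V_k(s†), constants ε ∈ (0,1], g ∈ [0,1], T ≥ 1, p₁(f) ∈ [0,1]. If V_0 ≡ 0, then for every k and every f ∈ {0,1}, the map Δ ↦ V_k(Δ,f) is nondecreasing. -/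
theorem stmt_10 (N T : ℕ) (hN : 1 ≤ N) (hT : 1 ≤ T)
    (ε g : ℝ) (hε : 0 < ε ∧ ε ≤ 1) (hg : 0 ≤ g ∧ g ≤ 1)
    (p1 : Bool → ℝ) (hp1 : ∀ f, 0 ≤ p1 f ∧ p1 f ≤ 1)
    (sΔ : ℕ) (sf : Bool) (hs : 1 ≤ sΔ ∧ sΔ ≤ N)
    (V h : ℕ → ℕ → Bool → ℝ)
    (hV0 : ∀ Δ f, V 0 Δ f = 0)
    (hh : ∀ k Δ f, h k Δ f = V k Δ f - V k sΔ sf)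
    (hrec : ∀ k Δ f, 1 ≤ Δ → Δ ≤ N →
      V (k + 1) Δ f = min
        ((Δ : ℝ) + (1 - ε) * h k Δ f
          + ε * (1 - g) * h k (min (Δ + 1) N) false
          + ε * g * h k (min (Δ + 1) N) true)
        ((Δ : ℝ) + ((T : ℝ) - 1) / 2 + (1 - ε / T) * h k Δ f
          + (ε / T) * p1 f * ((1 - g) * h k (min (Δ + T) N) false
                              + g * h k (min (Δ + T) N) true)
          + (ε / T) * (1 - p1 f) * ((1 - g) * h k T false + g * h k T true))) :
    ∀ k f Δ₁ Δ₂, 1 ≤ Δ₁ → Δ₁ ≤ Δ₂ → Δ₂ ≤ N → V k Δ₁ f ≤ V k Δ₂ f := by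
  obtain ⟨hε0, hε1⟩ := hε
  obtain ⟨hg0, hg1⟩ := hg
  have hT' : (1:ℝ) ≤ T := by exact_mod_cast hT
  have hT0 : (0:ℝ) < T := by linarith
  have hεT1 : ε / T ≤ 1 := by rw [div_le_one hT0]; linarith
  have hεT0 : 0 ≤ ε / T := by positivity
  intro k
  induction k with
  | zero => intro f Δ₁ Δ₂ _ _ _; simp [hV0]
  | succ k ih =>
    intro f Δ₁ Δ₂ h1 h12 h2N
    have hmono : ∀ f' a b, 1 ≤ a → a ≤ b → b ≤ N → h k a f' ≤ h k b f' := by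
      intro f' a b ha hab hbN
      rw [hh, hh]
      have := ih f' a b ha hab hbN
      linarith
    rw [hrec k Δ₁ f h1 (le_trans h12 h2N), hrec k Δ₂ f (le_trans h1 h12) h2N]
    have hc : (Δ₁:ℝ) ≤ Δ₂ := by exact_mod_cast h12
    have hA := hmono f Δ₁ Δ₂ h1 h12 h2N
    apply min_le_min
    · have hBf := hmono false (min (Δ₁+1) N) (min (Δ₂+1) N)
        (le_min (by omega) hN) (min_le_min (by omega) le_rfl) (min_le_right _ _)
      have hBt := hmono true (min (Δ₁+1) N) (min (Δ₂+1) N)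
        (le_min (by omega) hN) (min_le_min (by omega) le_rfl) (min_le_right _ _)
      have t1 := mul_le_mul_of_nonneg_left hA (show (0:ℝ) ≤ 1 - ε by linarith)
      have t2 := mul_le_mul_of_nonneg_left hBf (show (0:ℝ) ≤ ε * (1 - g) by nlinarith)
      have t3 := mul_le_mul_of_nonneg_left hBt (show (0:ℝ) ≤ ε * g by nlinarith)
      linarith
    · have hBf := hmono false (min (Δ₁+T) N) (min (Δ₂+T) N)
        (le_min (by omega) hN) (min_le_min (by omega) le_rfl) (min_le_right _ _)
      have hBt := hmono true (min (Δ₁+T) N) (min (Δ₂+T) N)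
        (le_min (by omega) hN) (min_le_min (by omega) le_rfl) (min_le_right _ _)
      have t1 := mul_le_mul_of_nonneg_left hA (show (0:ℝ) ≤ 1 - ε / T by linarith)
      have hcomb : (1 - g) * h k (min (Δ₁+T) N) false + g * h k (min (Δ₁+T) N) true
          ≤ (1 - g) * h k (min (Δ₂+T) N) false + g * h k (min (Δ₂+T) N) true := by
        have u1 := mul_le_mul_of_nonneg_left hBf (show (0:ℝ) ≤ 1 - g by linarith)
        have u2 := mul_le_mul_of_nonneg_left hBt hg0
        linarith
      have t2 := mul_le_mul_of_nonneg_left hcomb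
        (show (0:ℝ) ≤ (ε / T) * p1 f by exact mul_nonneg hεT0 (hp1 f).1)
      linarith
end

section
/- Under the same value-iteration setup (actions 0 and 1 with the stated Q-updates, V_0 ≡ 0, h_0 ≡ 0), for every iteration k, every f ∈ {0,1}, and every positive integer w, the map Δ ↦ h_k(Δ+w, f) - h_k(Δ, f) is nonincreasing in Δ (wherever defined within the state space), i.e., h_k(·, f) is concave in Δ. -/
private lemma chainMono (u : ℕ → ℝ) (N : ℕ)
    (m1 : ∀ Δ, 1 ≤ Δ → Δ + 1 ≤ N → u Δ ≤ u (Δ + 1)) :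
    ∀ a b, 1 ≤ a → a ≤ b → b ≤ N → u a ≤ u b := by
  intro a b ha hab
  induction b, hab using Nat.le_induction with
  | base => intro _; exact le_refl _
  | succ b hab ih =>
    intro hbN
    exact (ih (by omega)).trans (m1 b (by omega) hbN)

private lemma chainDiff (u : ℕ → ℝ) (N : ℕ)
    (c3 : ∀ Δ, 1 ≤ Δ → Δ + 2 ≤ N → u (Δ + 2) - u (Δ + 1) ≤ u (Δ + 1) - u Δ) :
    ∀ a b, 1 ≤ a → a ≤ b → b + 1 ≤ N → u (b + 1) - u b ≤ u (a + 1) - u a := by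
  intro a b ha hab
  induction b, hab using Nat.le_induction with
  | base => intro _; exact le_refl _
  | succ b hab ih =>
    intro hbN
    have h1 := c3 b (by omega) (by omega)
    have h2 := ih (by omega)
    have e : b + 1 + 1 = b + 2 := rfl
    rw [e]
    linarith

private lemma generalConc (u : ℕ → ℝ) (N : ℕ)
    (c3 : ∀ Δ, 1 ≤ Δ → Δ + 2 ≤ N → u (Δ + 2) - u (Δ + 1) ≤ u (Δ + 1) - u Δ) :
    ∀ w Δ₁ Δ₂, 1 ≤ w → 1 ≤ Δ₁ → Δ₁ ≤ Δ₂ → Δ₂ + w ≤ N →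
      u (Δ₂ + w) - u Δ₂ ≤ u (Δ₁ + w) - u Δ₁ := by
  intro w
  induction w with
  | zero => intro _ _ hw; omega
  | succ w ih =>
    intro Δ₁ Δ₂ _ h1 h12 hNN
    rcases Nat.eq_zero_or_pos w with rfl | hw
    · exact chainDiff u N c3 Δ₁ Δ₂ h1 h12 hNN
    · have e1 := chainDiff u N c3 (Δ₁ + w) (Δ₂ + w) (by omega) (by omega) (by omega)
      have e2 := ih Δ₁ Δ₂ hw h1 h12 (by omega)
      have r1 : Δ₂ + (w + 1) = Δ₂ + w + 1 := rfl
      have r2 : Δ₁ + (w + 1) = Δ₁ + w + 1 := rfl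
      rw [r1, r2]
      linarith

private lemma clampConc (u : ℕ → ℝ) (N : ℕ)
    (m1 : ∀ Δ, 1 ≤ Δ → Δ + 1 ≤ N → u Δ ≤ u (Δ + 1))
    (c3 : ∀ Δ, 1 ≤ Δ → Δ + 2 ≤ N → u (Δ + 2) - u (Δ + 1) ≤ u (Δ + 1) - u Δ)
    (c Δ : ℕ) (hc : 1 ≤ c) :
    u (min (Δ + 2 + c) N) - u (min (Δ + 1 + c) N)
      ≤ u (min (Δ + 1 + c) N) - u (min (Δ + c) N) := by
  rcases le_or_gt (Δ + 2 + c) N with h2 | h2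
  · rw [min_eq_left h2, min_eq_left (by omega), min_eq_left (by omega)]
    have := c3 (Δ + c) (by omega) (by omega)
    have e1 : Δ + c + 2 = Δ + 2 + c := by omega
    have e2 : Δ + c + 1 = Δ + 1 + c := by omega
    rw [e1, e2] at this
    exact this
  · rcases le_or_gt (Δ + 1 + c) N with h1 | h1
    · -- N = Δ + 1 + c
      rw [min_eq_right (by omega), min_eq_left h1, min_eq_left (by omega)]
      have hm := m1 (Δ + c) (by omega) (by omega)
      have e : Δ + c + 1 = Δ + 1 + c := by omega
      rw [e] at hm
      have hNe : N = Δ + 1 + c := by omega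
      rw [hNe]
      linarith
    · -- all mins clamp to N
      rw [min_eq_right (by omega), min_eq_right (by omega), min_eq_right (by omega)]

private lemma minMono (x0 x1 y0 y1 c : ℝ) (hx : x0 ≤ x1) (hy : y0 ≤ y1) :
    min x0 y0 - c ≤ min x1 y1 - c :=
  sub_le_sub_right (min_le_min hx hy) c

private lemma minConc (x0 x1 x2 y0 y1 y2 c : ℝ)
    (hx : x0 + x2 ≤ 2 * x1) (hy : y0 + y2 ≤ 2 * y1) :
    (min x2 y2 - c) - (min x1 y1 - c) ≤ (min x1 y1 - c) - (min x0 y0 - c) := by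
  rcases le_total x1 y1 with hc | hc
  · rw [min_eq_left hc]
    have a0 := min_le_left x0 y0
    have a2 := min_le_left x2 y2
    linarith
  · rw [min_eq_right hc]
    have a0 := min_le_right x0 y0
    have a2 := min_le_right x2 y2
    linarith

theorem stmt_11 (N T : ℕ) (hN : 1 ≤ N) (hT : 1 ≤ T)
    (ε g : ℝ) (hε : 0 < ε ∧ ε ≤ 1) (hg : 0 ≤ g ∧ g ≤ 1)
    (p1 : Bool → ℝ) (hp1 : ∀ f, 0 ≤ p1 f ∧ p1 f ≤ 1)
    (sΔ : ℕ) (sf : Bool) (hs : 1 ≤ sΔ ∧ sΔ ≤ N)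
    (V h : ℕ → ℕ → Bool → ℝ)
    (hV0 : ∀ Δ f, V 0 Δ f = 0)
    (hh : ∀ k Δ f, h k Δ f = V k Δ f - V k sΔ sf)
    (hrec : ∀ k Δ f, 1 ≤ Δ → Δ ≤ N →
      V (k + 1) Δ f = min
        ((Δ : ℝ) + (1 - ε) * h k Δ f
          + ε * (1 - g) * h k (min (Δ + 1) N) false
          + ε * g * h k (min (Δ + 1) N) true)
        ((Δ : ℝ) + ((T : ℝ) - 1) / 2 + (1 - ε / T) * h k Δ f
          + (ε / T) * p1 f * ((1 - g) * h k (min (Δ + T) N) false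
                              + g * h k (min (Δ + T) N) true)
          + (ε / T) * (1 - p1 f) * ((1 - g) * h k T false + g * h k T true)))
    (hh0 : ∀ Δ f, h 0 Δ f = 0) :
    ∀ k f (w Δ₁ Δ₂ : ℕ), 1 ≤ w → 1 ≤ Δ₁ → Δ₁ ≤ Δ₂ → Δ₂ + w ≤ N →
      h k (Δ₂ + w) f - h k Δ₂ f ≤ h k (Δ₁ + w) f - h k Δ₁ f := by
  obtain ⟨hε0, hε1⟩ := hε
  obtain ⟨hg0, hg1⟩ := hg
  have hT1 : (1 : ℝ) ≤ (T : ℝ) := by exact_mod_cast hT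
  have hεT0 : 0 ≤ ε / T := div_nonneg hε0.le (by linarith)
  have hεT1 : ε / T ≤ 1 := by
    have := div_le_self hε0.le hT1
    linarith
  have key : ∀ k,
      (∀ f Δ, 1 ≤ Δ → Δ + 1 ≤ N → h k Δ f ≤ h k (Δ + 1) f) ∧
      (∀ f Δ, 1 ≤ Δ → Δ + 2 ≤ N →
        h k (Δ + 2) f - h k (Δ + 1) f ≤ h k (Δ + 1) f - h k Δ f) := by
    intro k
    induction k with
    | zero =>
      constructor <;> intro f Δ _ _ <;> simp [hh0]
    | succ k ih =>
      obtain ⟨im, ic⟩ := ih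
      have cm : ∀ (f : Bool) (c Δ : ℕ), 1 ≤ c →
          h k (min (Δ + c) N) f ≤ h k (min (Δ + 1 + c) N) f := by
        intro f c Δ hc
        exact chainMono (fun x => h k x f) N (im f) _ _ (by omega) (by omega) (by omega)
      have cc : ∀ (f : Bool) (c Δ : ℕ), 1 ≤ c →
          h k (min (Δ + 2 + c) N) f - h k (min (Δ + 1 + c) N) f
            ≤ h k (min (Δ + 1 + c) N) f - h k (min (Δ + c) N) f := by
        intro f c Δ hc
        exact clampConc (fun x => h k x f) N (im f) (ic f) c Δ hc
      constructor
      · intro f Δ h1 h2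
        rw [hh, hh, hrec k Δ f h1 (by omega), hrec k (Δ + 1) f (by omega) h2]
        apply minMono
        · have t1 := im f Δ h1 h2
          have t2 := cm false 1 Δ le_rfl
          have t3 := cm true 1 Δ le_rfl
          have p1' := mul_le_mul_of_nonneg_left t1 (show (0:ℝ) ≤ 1 - ε by linarith)
          have p2 := mul_le_mul_of_nonneg_left t2
            (show (0:ℝ) ≤ ε * (1 - g) from mul_nonneg hε0.le (by linarith))
          have p3 := mul_le_mul_of_nonneg_left t3
            (show (0:ℝ) ≤ ε * g from mul_nonneg hε0.le hg0)
          push_cast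
          linarith
        · have t1 := im f Δ h1 h2
          have t2 := cm false T Δ hT
          have t3 := cm true T Δ hT
          have q1 := mul_le_mul_of_nonneg_left t1 (show (0:ℝ) ≤ 1 - ε / T by linarith)
          have hpf := hp1 f
          have inner : (1 - g) * h k (min (Δ + T) N) false + g * h k (min (Δ + T) N) true
              ≤ (1 - g) * h k (min (Δ + 1 + T) N) false + g * h k (min (Δ + 1 + T) N) true := by
            have u2 := mul_le_mul_of_nonneg_left t2 (show (0:ℝ) ≤ 1 - g by linarith)
            have u3 := mul_le_mul_of_nonneg_left t3 hg0
            linarith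
          have q2 := mul_le_mul_of_nonneg_left inner
            (show (0:ℝ) ≤ ε / T * p1 f from mul_nonneg hεT0 hpf.1)
          push_cast
          linarith
      · intro f Δ h1 h2
        rw [hh, hh, hh, hrec k Δ f h1 (by omega), hrec k (Δ + 1) f (by omega) (by omega),
          hrec k (Δ + 2) f (by omega) h2]
        apply minConc
        · have c1 := ic f Δ h1 h2
          have c1' : h k Δ f + h k (Δ + 2) f ≤ 2 * h k (Δ + 1) f := by linarith
          have c2 := cc false 1 Δ le_rfl
          have c2' : h k (min (Δ + 1) N) false + h k (min (Δ + 2 + 1) N) false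
              ≤ 2 * h k (min (Δ + 1 + 1) N) false := by linarith
          have c3' := cc true 1 Δ le_rfl
          have c3'' : h k (min (Δ + 1) N) true + h k (min (Δ + 2 + 1) N) true
              ≤ 2 * h k (min (Δ + 1 + 1) N) true := by linarith
          have p1' := mul_le_mul_of_nonneg_left c1' (show (0:ℝ) ≤ 1 - ε by linarith)
          have p2 := mul_le_mul_of_nonneg_left c2'
            (show (0:ℝ) ≤ ε * (1 - g) from mul_nonneg hε0.le (by linarith))
          have p3 := mul_le_mul_of_nonneg_left c3''
            (show (0:ℝ) ≤ ε * g from mul_nonneg hε0.le hg0)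
          push_cast
          linarith
        · have c1 := ic f Δ h1 h2
          have c1' : h k Δ f + h k (Δ + 2) f ≤ 2 * h k (Δ + 1) f := by linarith
          have q1 := mul_le_mul_of_nonneg_left c1' (show (0:ℝ) ≤ 1 - ε / T by linarith)
          have hpf := hp1 f
          have c2 := cc false T Δ hT
          have c3' := cc true T Δ hT
          have u2 := mul_le_mul_of_nonneg_left
            (show h k (min (Δ + T) N) false + h k (min (Δ + 2 + T) N) false
              ≤ 2 * h k (min (Δ + 1 + T) N) false by linarith)
            (show (0:ℝ) ≤ 1 - g by linarith)
          have u3 := mul_le_mul_of_nonneg_left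
            (show h k (min (Δ + T) N) true + h k (min (Δ + 2 + T) N) true
              ≤ 2 * h k (min (Δ + 1 + T) N) true by linarith)
            hg0
          have inner : ((1 - g) * h k (min (Δ + T) N) false + g * h k (min (Δ + T) N) true)
              + ((1 - g) * h k (min (Δ + 2 + T) N) false + g * h k (min (Δ + 2 + T) N) true)
              ≤ 2 * ((1 - g) * h k (min (Δ + 1 + T) N) false
                  + g * h k (min (Δ + 1 + T) N) true) := by linarith
          have q2 := mul_le_mul_of_nonneg_left inner
            (show (0:ℝ) ≤ ε / T * p1 f from mul_nonneg hεT0 hpf.1)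
          push_cast
          linarith
  intro k f
  exact generalConc (fun Δ => h k Δ f) N ((key k).2 f)
end

section
/- In the uniformized TAoI MDP, suppose the relative value function h satisfies, for each fixed f: (i) h(·,f) is nondecreasing and concave in Δ, and (ii) h(Δ₂,f) - h(Δ₁,f) ≥ (L/(ε(1-p₁(f))))·(Δ₂-Δ₁) for Δ₁ ≤ Δ₂. Then for Δ₁ ≤ Δ₂, Q((Δ₂,f),1) - Q((Δ₁,f),1) ≤ h(Δ₂,f) - h(Δ₁,f). Consequently, if the optimal action at (Δ₁,f) is to transmit, then the optimal action at (Δ₂,f) is also to transmit; i.e., the optimal policy is of threshold type in Δ. -/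
theorem stmt_13 (T : ℕ) (hT : 1 ≤ T)
    (ε g κ : ℝ) (hε : 0 < ε ∧ ε ≤ 1) (hg : 0 ≤ g ∧ g ≤ 1)
    (p1 : Bool → ℝ) (hp1 : ∀ f, 0 ≤ p1 f ∧ p1 f < 1)
    (h : ℕ → Bool → ℝ) (Q0 Q1 : ℕ → Bool → ℝ)
    (hQ0 : ∀ Δ f, Q0 Δ f = (Δ : ℝ) + (1 - ε) * h Δ f
        + ε * ((1 - g) * h (Δ + 1) false + g * h (Δ + 1) true))
    (hQ1 : ∀ Δ f, Q1 Δ f = (Δ : ℝ) + (1 - ε / T) * h Δ f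
        + (ε * p1 f / T) * ((1 - g) * h (Δ + T) false + g * h (Δ + T) true)
        + (ε * (1 - p1 f) / T) * ((1 - g) * h T false + g * h T true))
    (hmono : ∀ f (Δ₁ Δ₂ : ℕ), Δ₁ ≤ Δ₂ → h Δ₁ f ≤ h Δ₂ f)
    (hconc : ∀ f (w Δ₁ Δ₂ : ℕ), Δ₁ ≤ Δ₂ →
      h (Δ₂ + w) f - h Δ₂ f ≤ h (Δ₁ + w) f - h Δ₁ f)
    (hslope : ∀ f (Δ₁ Δ₂ : ℕ), Δ₁ ≤ Δ₂ →
      (T : ℝ) / (ε * (1 - p1 f)) * ((Δ₂ : ℝ) - (Δ₁ : ℝ)) ≤ h Δ₂ f - h Δ₁ f)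
    (hVh : ∀ Δ f, h Δ f = min (Q0 Δ f) (Q1 Δ f) - κ) :
    (∀ f (Δ₁ Δ₂ : ℕ), Δ₁ ≤ Δ₂ → Q1 Δ₂ f - Q1 Δ₁ f ≤ h Δ₂ f - h Δ₁ f) ∧
    (∀ f (Δ₁ Δ₂ : ℕ), Δ₁ ≤ Δ₂ → Q1 Δ₁ f ≤ Q0 Δ₁ f → Q1 Δ₂ f ≤ Q0 Δ₂ f) := by
  obtain ⟨hε0, hε1⟩ := hε
  obtain ⟨hg0, hg1⟩ := hg
  have hT0 : (0:ℝ) < (T:ℝ) := by exact_mod_cast Nat.lt_of_lt_of_le Nat.zero_lt_one hT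
  have key : ∀ f (Δ₁ Δ₂ : ℕ), Δ₁ ≤ Δ₂ → Q1 Δ₂ f - Q1 Δ₁ f ≤ h Δ₂ f - h Δ₁ f := by
    intro f Δ₁ Δ₂ hle
    obtain ⟨hp0, hp1'⟩ := hp1 f
    rcases le_total (Q1 Δ₂ f) (Q0 Δ₂ f) with hc | hc
    · -- min at Δ₂ is Q1 : immediate
      have e2 : h Δ₂ f = Q1 Δ₂ f - κ := by rw [hVh, min_eq_right hc]
      have e1 : h Δ₁ f ≤ Q1 Δ₁ f - κ := by
        rw [hVh]
        have := min_le_right (Q0 Δ₁ f) (Q1 Δ₁ f)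
        linarith
      linarith
    · -- min at Δ₂ is Q0
      set w : ℝ := (Δ₂:ℝ) - (Δ₁:ℝ) with hwdef
      have hw : (0:ℝ) ≤ w := by
        have : (Δ₁:ℝ) ≤ (Δ₂:ℝ) := by exact_mod_cast hle
        linarith
      set D : ℝ := h Δ₂ f - h Δ₁ f with hDdef
      set MT : ℝ := (1-g) * (h (Δ₂+T) false - h (Δ₁+T) false)
          + g * (h (Δ₂+T) true - h (Δ₁+T) true) with hMTdef
      set M1 : ℝ := (1-g) * (h (Δ₂+1) false - h (Δ₁+1) false)
          + g * (h (Δ₂+1) true - h (Δ₁+1) true) with hM1def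
      -- MT ≥ 0
      have hMT0 : 0 ≤ MT := by
        have h0 := hmono false (Δ₁+T) (Δ₂+T) (by omega)
        have h1 := hmono true (Δ₁+T) (Δ₂+T) (by omega)
        have : 0 ≤ (1-g) * (h (Δ₂+T) false - h (Δ₁+T) false) :=
          mul_nonneg (by linarith) (by linarith)
        have : 0 ≤ g * (h (Δ₂+T) true - h (Δ₁+T) true) :=
          mul_nonneg hg0 (by linarith)
        rw [hMTdef]; linarith
      -- MT ≤ M1 by concavity
      have hMTM1 : MT ≤ M1 := by
        have e2 : Δ₂ + 1 + (T - 1) = Δ₂ + T := by omega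
        have e1 : Δ₁ + 1 + (T - 1) = Δ₁ + T := by omega
        have c0 := hconc false (T-1) (Δ₁+1) (Δ₂+1) (by omega)
        have c1 := hconc true (T-1) (Δ₁+1) (Δ₂+1) (by omega)
        rw [e1, e2] at c0 c1
        have d0 : h (Δ₂+T) false - h (Δ₁+T) false
            ≤ h (Δ₂+1) false - h (Δ₁+1) false := by linarith
        have d1 : h (Δ₂+T) true - h (Δ₁+T) true
            ≤ h (Δ₂+1) true - h (Δ₁+1) true := by linarith
        have m0 := mul_le_mul_of_nonneg_left d0 (by linarith : (0:ℝ) ≤ 1-g)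
        have m1 := mul_le_mul_of_nonneg_left d1 hg0
        rw [hMTdef, hM1def]; linarith
      -- slope bound: T * w ≤ ε * (1 - p1 f) * D
      have hsl : (T:ℝ) * w ≤ ε * (1 - p1 f) * D := by
        have h1 := hslope f Δ₁ Δ₂ hle
        have hpos : (0:ℝ) < ε * (1 - p1 f) := mul_pos hε0 (by linarith)
        rw [div_mul_eq_mul_div, div_le_iff₀ hpos] at h1
        rw [hDdef, hwdef]
        nlinarith [h1]
      -- Q0 difference identity and lower bound on D
      have hQ0diff : Q0 Δ₂ f - Q0 Δ₁ f = w + (1-ε) * D + ε * M1 := by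
        rw [hQ0, hQ0, hwdef, hDdef, hM1def]; ring
      have hD0 : Q0 Δ₂ f - Q0 Δ₁ f ≤ D := by
        have e2 : h Δ₂ f = Q0 Δ₂ f - κ := by rw [hVh, min_eq_left hc]
        have e1 : h Δ₁ f ≤ Q0 Δ₁ f - κ := by
          rw [hVh]
          have := min_le_left (Q0 Δ₁ f) (Q1 Δ₁ f)
          linarith
        rw [hDdef]; linarith
      -- hence ε*D ≥ w + ε*M1
      have hA : w + ε * M1 ≤ ε * D := by nlinarith [hQ0diff, hD0]
      have hDM : MT ≤ D := by
        have h2 : ε * MT ≤ ε * M1 := mul_le_mul_of_nonneg_left hMTM1 (le_of_lt hε0)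
        have h3 : ε * MT ≤ ε * D := by linarith
        exact le_of_mul_le_mul_left h3 hε0
      -- main numeric inequality: w*T + ε*p1*MT ≤ ε*D
      have hmul : w * (T:ℝ) + ε * p1 f * MT ≤ ε * D := by
        have h4 : ε * p1 f * MT ≤ ε * p1 f * D :=
          mul_le_mul_of_nonneg_left hDM (mul_nonneg (le_of_lt hε0) hp0)
        have hid : ε * D = ε * (1 - p1 f) * D + ε * p1 f * D := by ring
        nlinarith [hsl, h4, mul_nonneg hw hp0]
      -- Q1 difference identity
      have hQ1diff : Q1 Δ₂ f - Q1 Δ₁ f = w + (1 - ε/(T:ℝ)) * D + (ε * p1 f / (T:ℝ)) * MT := by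
        rw [hQ1, hQ1, hwdef, hDdef, hMTdef]; ring
      have hfin : w + (ε * p1 f / (T:ℝ)) * MT ≤ (ε/(T:ℝ)) * D := by
        have e : w + (ε * p1 f / (T:ℝ)) * MT = (w * (T:ℝ) + ε * p1 f * MT) / (T:ℝ) := by
          field_simp
        have e' : (ε/(T:ℝ)) * D = (ε * D) / (T:ℝ) := by ring
        rw [e, e']
        gcongr
      have hexp : (1 - ε/(T:ℝ)) * D = D - (ε/(T:ℝ)) * D := by ring
      rw [hQ1diff]
      linarith [hfin, hexp.ge, hexp.le]
  refine ⟨key, ?_⟩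
  intro f Δ₁ Δ₂ hle h12
  have hk := key f Δ₁ Δ₂ hle
  have e1 : h Δ₁ f = Q1 Δ₁ f - κ := by rw [hVh, min_eq_right h12]
  have e2 : h Δ₂ f ≤ Q0 Δ₂ f - κ := by
    rw [hVh]
    have := min_le_left (Q0 Δ₂ f) (Q1 Δ₂ f)
    linarith
  linarith
end

section
/- Suppose the optimal policy of the uniformized TAoI MDP is threshold-type with thresholds Ω₀* (for f=0) and Ω₁* (for f=1). If the relative value function satisfies h(Δ,1) ≤ h(Δ,0) for all Δ, h is nondecreasing in Δ, and p₁(0) > p₁(1), then Ω₀* ≥ Ω₁*. If instead h(Δ,1) ≥ h(Δ,0) for all Δ and p₁(0) < p₁(1), then Ω₀* ≤ Ω₁*. If h(Δ,1) = h(Δ,0) for all Δ and p₁(0) = p₁(1), then Ω₀* = Ω₁*. -/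
theorem stmt_16 (T : ℕ) (hT : 1 ≤ T)
    (ε g : ℝ) (hε : 0 < ε ∧ ε ≤ 1) (hg : 0 ≤ g ∧ g ≤ 1)
    (p1 : Bool → ℝ) (hp1 : ∀ f, 0 ≤ p1 f ∧ p1 f ≤ 1)
    (h : ℕ → Bool → ℝ) (Q0 Q1 : ℕ → Bool → ℝ)
    (hQ0 : ∀ Δ f, Q0 Δ f = (Δ : ℝ) + (1 - ε) * h Δ f
        + ε * ((1 - g) * h (Δ + 1) false + g * h (Δ + 1) true))
    (hQ1 : ∀ Δ f, Q1 Δ f = (Δ : ℝ) + (1 - ε / T) * h Δ f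
        + (ε * p1 f / T) * ((1 - g) * h (Δ + T) false + g * h (Δ + T) true)
        + (ε * (1 - p1 f) / T) * ((1 - g) * h T false + g * h T true))
    (hmono : ∀ f (Δ₁ Δ₂ : ℕ), Δ₁ ≤ Δ₂ → h Δ₁ f ≤ h Δ₂ f)
    (Ω : Bool → ℕ)
    (hthresh : ∀ (Δ : ℕ) (f : Bool), Ω f ≤ Δ ↔ Q1 Δ f ≤ Q0 Δ f) :
    ((∀ Δ, h Δ true ≤ h Δ false) → p1 false > p1 true → Ω true ≤ Ω false) ∧
    ((∀ Δ, h Δ false ≤ h Δ true) → p1 false < p1 true → Ω false ≤ Ω true) ∧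
    ((∀ Δ, h Δ true = h Δ false) → p1 false = p1 true → Ω false = Ω true) := by
  have hT' : (1 : ℝ) ≤ (T : ℝ) := by exact_mod_cast hT
  have hTpos : (0 : ℝ) < (T : ℝ) := lt_of_lt_of_le one_pos hT'
  have hεT : ε / T ≤ ε := div_le_self hε.1.le hT'
  have hεTnn : 0 ≤ ε / T := div_nonneg hε.1.le hTpos.le
  have key : ∀ Δ : ℕ, Q1 Δ true - Q0 Δ true - (Q1 Δ false - Q0 Δ false)
      = (ε - ε / T) * (h Δ true - h Δ false)
        + (ε / T) * (p1 true - p1 false) *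
          ((1 - g) * (h (Δ + T) false - h T false)
            + g * (h (Δ + T) true - h T true)) := by
    intro Δ
    rw [hQ0, hQ0, hQ1, hQ1]
    field_simp
    ring
  have hM : ∀ Δ : ℕ, 0 ≤ (1 - g) * (h (Δ + T) false - h T false)
      + g * (h (Δ + T) true - h T true) := by
    intro Δ
    have h1 := hmono false T (Δ + T) (Nat.le_add_left T Δ)
    have h2 := hmono true T (Δ + T) (Nat.le_add_left T Δ)
    have := mul_nonneg (by linarith [hg.2] : (0:ℝ) ≤ 1 - g) (by linarith : (0:ℝ) ≤ h (Δ + T) false - h T false)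
    have := mul_nonneg hg.1 (by linarith : (0:ℝ) ≤ h (Δ + T) true - h T true)
    linarith
  refine ⟨?_, ?_, ?_⟩
  · intro hle hp
    have h1 : Q1 (Ω false) false ≤ Q0 (Ω false) false := (hthresh _ false).mp le_rfl
    have hk := key (Ω false)
    have t1 : (ε - ε / T) * (h (Ω false) true - h (Ω false) false) ≤ 0 :=
      mul_nonpos_of_nonneg_of_nonpos (by linarith) (by linarith [hle (Ω false)])
    have t2 : (ε / T) * (p1 true - p1 false) *
        ((1 - g) * (h (Ω false + T) false - h T false)
          + g * (h (Ω false + T) true - h T true)) ≤ 0 :=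
      mul_nonpos_of_nonpos_of_nonneg
        (mul_nonpos_of_nonneg_of_nonpos hεTnn (by linarith)) (hM _)
    exact (hthresh _ true).mpr (by linarith)
  · intro hle hp
    have h1 : Q1 (Ω true) true ≤ Q0 (Ω true) true := (hthresh _ true).mp le_rfl
    have hk := key (Ω true)
    have t1 : (ε - ε / T) * (h (Ω true) true - h (Ω true) false) ≥ 0 :=
      mul_nonneg (by linarith) (by linarith [hle (Ω true)])
    have t2 : 0 ≤ (ε / T) * (p1 true - p1 false) *
        ((1 - g) * (h (Ω true + T) false - h T false)
          + g * (h (Ω true + T) true - h T true)) :=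
      mul_nonneg (mul_nonneg hεTnn (by linarith)) (hM _)
    exact (hthresh _ false).mpr (by linarith)
  · intro heq hp
    apply le_antisymm
    · have h1 : Q1 (Ω true) true ≤ Q0 (Ω true) true := (hthresh _ true).mp le_rfl
      have hk := key (Ω true)
      rw [heq (Ω true), hp] at hk
      exact (hthresh _ false).mpr (by simp at hk; linarith)
    · have h1 : Q1 (Ω false) false ≤ Q0 (Ω false) false := (hthresh _ false).mp le_rfl
      have hk := key (Ω false)
      rw [heq (Ω false), hp] at hk
      exact (hthresh _ true).mpr (by simp at hk; linarith)
end
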